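/- arXiv:1009.0381 — 11 statements merged into one kernel-verified Lean document; each statement's English description precedes it below -/
import Mathlib

section
/- If a group H is the union of finitely many cosets C_1 g_1, ..., C_n g_n of subgroups C_1, ..., C_n, then at least one of the subgroups C_i has index at most n in H. -/
open scoped Pointwise

/-- B. H. Neumann's lemma: if a group `H` is the union of `n` cosets
`C i * g i`, then some `C i` has (positive, i.e. finite) index at most `n`. -/
theorem neumann_cosets {H : Type*} [Group H] (n : ℕ) (C : Fin n → Subgroup H)
    (g : Fin n → H) (hcover : ∀ h : H, ∃ i : Fin n, ∃ c ∈ C i, h = c * g i) :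
    ∃ i : Fin n, 0 < (C i).index ∧ (C i).index ≤ n := by
  classical
  -- conjugated subgroups so that right cosets become left cosets
  set D : Fin n → Subgroup H := fun i =>
    (C i).comap ((MulAut.conj (g i)).toMonoidHom) with hD
  have hDindex : ∀ i, (D i).index = (C i).index := fun i =>
    Subgroup.index_comap_of_surjective _ (MulEquiv.surjective _)
  have hcovers : ⋃ i ∈ (Finset.univ : Finset (Fin n)),
      (g i) • (D i : Set H) = Set.univ := by
    ext h
    simp only [Set.mem_iUnion, Set.mem_univ, iff_true, Finset.mem_univ,
      exists_true_left]
    obtain ⟨i, c, hc, rfl⟩ := hcover h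
    refine ⟨i, (g i)⁻¹ * c * g i, ?_, by simp [smul_eq_mul, mul_assoc]⟩
    simpa [hD, Subgroup.mem_comap, MulAut.conj_apply, mul_assoc] using hc
  obtain ⟨i, _, hfi, hle⟩ := Subgroup.exists_index_le_card_of_leftCoset_cover hcovers
  refine ⟨i, ?_, ?_⟩
  · rw [← hDindex]; exact Nat.pos_of_ne_zero hfi.index_ne_zero
  · rw [← hDindex]; simpa using hle
end

section
/- If a group H is the union of finitely many subsets S_1, ..., S_n, and for each i we set C_i to be the subgroup generated by all elements a b⁻¹ with a, b ∈ S_i, then at least one of the subgroups C_i has index at most n in H. -/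
open scoped Pointwise

/-- If a group `H` is the union of `n` nonempty subsets `S i`, and
`C i` is the subgroup generated by quotients `a * b⁻¹` with `a b ∈ S i`,
then some `C i` has (finite) index at most `n` in `H`. -/
theorem neumann_subsets {H : Type*} [Group H] (n : ℕ) (S : Fin n → Set H)
    (hne : ∀ i, (S i).Nonempty)
    (hcover : ∀ h : H, ∃ i : Fin n, h ∈ S i)
    (C : Fin n → Subgroup H)
    (hC : ∀ i, C i = Subgroup.closure {x : H | ∃ a ∈ S i, ∃ b ∈ S i, x = a * b⁻¹}) :
    ∃ i : Fin n, 0 < (C i).index ∧ (C i).index ≤ n := by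
  classical
  choose b hb using hne
  have hcovers : ⋃ i ∈ (Finset.univ : Finset (Fin n)),
      ((b i)⁻¹ : H) • (C i : Set H) = Set.univ := by
    ext x
    simp only [Set.mem_iUnion, Set.mem_univ, iff_true, Finset.mem_univ, exists_true_left]
    obtain ⟨i, hi⟩ := hcover x⁻¹
    refine ⟨i, ?_⟩
    rw [Set.mem_smul_set_iff_inv_smul_mem]
    have : x⁻¹ * (b i)⁻¹ ∈ C i := by
      rw [hC i]
      exact Subgroup.subset_closure ⟨x⁻¹, hi, b i, hb i, rfl⟩
    have h2 := (C i).inv_mem this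
    simpa [mul_assoc] using h2
  obtain ⟨i, -, hfi, hle⟩ := Subgroup.exists_index_le_card_of_leftCoset_cover hcovers
  exact ⟨i, Nat.pos_of_ne_zero hfi.index_ne_zero, by simpa using hle⟩
end

section
/- In the semidirect product G = U ⋊ ⟨ν⟩, where U is uniquely 2-divisible and ν is an involutory automorphism of U, all involutions of G are conjugate. -/
/-!
Since `u * u = 1` forces `u = 1`, every involution has the form `⟨u, ν⟩`, and squaring it to `1`
gives `ν u = u⁻¹`. If `w` is the square root of `u`, then `ν w` and `w⁻¹` both square to `u⁻¹`,
so `ν w = w⁻¹`, and conjugating `⟨1, ν⟩` by `w` gives `⟨w * ν w⁻¹, ν⟩ = ⟨w * w, ν⟩ = ⟨u, ν⟩`.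
-/

open Multiplicative SemidirectProduct

section UniqueSqrt

variable {U : Type*} [Group U] (h2div : ∀ u : U, ∃! v : U, v * v = u)
include h2div

theorem eq_of_mul_self_eq_mul_self_of_existsUnique_sqrt {a b : U} (h : a * a = b * b) :
    a = b :=
  (h2div (b * b)).unique h rfl

theorem eq_one_of_mul_self_eq_one_of_existsUnique_sqrt {a : U} (h : a * a = 1) : a = 1 :=
  eq_of_mul_self_eq_mul_self_of_existsUnique_sqrt h2div (h.trans (mul_one 1).symm)

theorem MulAut.apply_eq_inv_of_mul_self_eq {ν : MulAut U} {u w : U} (hu : ν u = u⁻¹)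
    (hw : w * w = u) : ν w = w⁻¹ :=
  eq_of_mul_self_eq_mul_self_of_existsUnique_sqrt h2div <| by
    rw [← map_mul, hw, hu, ← hw, mul_inv_rev]

end UniqueSqrt

namespace SemidirectProduct

variable {N G : Type*} [Group N] [Group G] {φ : G →* MulAut N}

theorem isConj_inr_mk (t : G) (w : N) :
    IsConj (inr t : N ⋊[φ] G) ⟨w * φ t w⁻¹, t⟩ :=
  isConj_iff.mpr ⟨inl w, by ext <;> simp [mul_assoc]⟩

end SemidirectProduct

section Involutions

variable {U : Type*} [Group U] (h2div : ∀ u : U, ∃! v : U, v * v = u)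
  {φ : Multiplicative (ZMod 2) →* MulAut U}
include h2div

theorem right_eq_ofAdd_one_of_orderOf_eq_two {g : U ⋊[φ] Multiplicative (ZMod 2)}
    (hg : orderOf g = 2) : g.right = ofAdd 1 := by
  obtain ⟨hsq, hne⟩ := orderOf_eq_prime_iff.mp hg
  have hright : ∀ x : Multiplicative (ZMod 2), x = 1 ∨ x = ofAdd 1 := by decide
  refine (hright g.right).resolve_left fun h1 => hne ?_
  have hleft : g.left * g.left = 1 := by
    simpa [sq, h1] using congrArg SemidirectProduct.left hsq
  ext
  · exact eq_one_of_mul_self_eq_one_of_existsUnique_sqrt h2div hleft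
  · exact h1

theorem isConj_inr_ofAdd_one_of_orderOf_eq_two {g : U ⋊[φ] Multiplicative (ZMod 2)}
    (hg : orderOf g = 2) : IsConj (inr (ofAdd 1)) g := by
  obtain ⟨u, t⟩ := g
  obtain rfl : t = ofAdd 1 := right_eq_ofAdd_one_of_orderOf_eq_two h2div hg
  have hinv : φ (ofAdd 1) u = u⁻¹ := by
    have hsq := congrArg SemidirectProduct.left (orderOf_eq_prime_iff.mp hg).1
    simp only [sq, mul_left, one_left] at hsq
    exact eq_inv_of_mul_eq_one_right hsq
  obtain ⟨w, hw, -⟩ := h2div u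
  have hνw := MulAut.apply_eq_inv_of_mul_self_eq h2div hinv hw
  simpa [hνw, hw] using isConj_inr_mk (φ := φ) (ofAdd 1) w

end Involutions

theorem involutions_conjugate_in_semidirect_general {U : Type*} [Group U]
    (h2div : ∀ u : U, ∃! v : U, v * v = u)
    (φ : Multiplicative (ZMod 2) →* MulAut U) :
    ∀ g h : U ⋊[φ] Multiplicative (ZMod 2),
      orderOf g = 2 → orderOf h = 2 → IsConj g h := fun _ _ hg hh =>
  (isConj_inr_ofAdd_one_of_orderOf_eq_two h2div hg).symm.trans
    (isConj_inr_ofAdd_one_of_orderOf_eq_two h2div hh)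

/-- In the semidirect product `G = U ⋊ ⟨ν⟩` of a uniquely 2-divisible group `U`
by a group of order 2 acting via an involutory automorphism `ν`, all
involutions of `G` are conjugate. -/
theorem involutions_conjugate_in_semidirect {U : Type*} [Group U]
    (h2div : ∀ u : U, ∃! v : U, v * v = u)
    (φ : Multiplicative (ZMod 2) →* MulAut U)
    (hφ : φ (Multiplicative.ofAdd 1) ≠ 1) :
    ∀ g h : U ⋊[φ] Multiplicative (ZMod 2),
      orderOf g = 2 → orderOf h = 2 → IsConj g h :=
  involutions_conjugate_in_semidirect_general h2div φ
end

section
/- If D is an abelian uniquely 2-divisible subgroup of a uniquely 2-divisible group U, then the quotient group C_U(D)/D is uniquely 2-divisible. -/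
/-!
Conjugation by an element of `D` fixes every `u ∈ C_U(D)`, hence fixes its unique square root, so
`C_U(D)` is itself uniquely 2-divisible. If `b * b ≡ u` modulo `D`, write `(b * b)⁻¹ * u = e * e`
with `e ∈ D` (so `e ∈ C_U(D)` by the same conjugation argument); since `e` commutes with `b`,
`b * e` is a square root of `u`, and uniqueness in `C_U(D)` gives `b ≡ √u` modulo `D`.
-/

def UniquelyTwoDivisible (G : Type*) [Mul G] : Prop :=
  ∀ x : G, ∃! y, y * y = x

namespace UniquelyTwoDivisible

variable {G : Type*} [Group G]

theorem mem_centralizer_of_mul_self_mem (h : UniquelyTwoDivisible G) {S : Set G} {v : G}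
    (hv : v * v ∈ Subgroup.centralizer S) : v ∈ Subgroup.centralizer S := by
  rw [Subgroup.mem_centralizer_iff] at hv ⊢
  intro d hd
  have hconj : MulAut.conj d v * MulAut.conj d v = v * v := by
    rw [← map_mul, MulAut.conj_apply, hv d hd, mul_inv_cancel_right]
  have hfix : MulAut.conj d v = v := (h (v * v)).unique hconj rfl
  rw [MulAut.conj_apply, mul_inv_eq_iff_eq_mul] at hfix
  exact hfix

theorem centralizer (h : UniquelyTwoDivisible G) (S : Set G) :
    UniquelyTwoDivisible (Subgroup.centralizer S) := by
  intro u
  obtain ⟨v, hv, huniq⟩ := h u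
  have hvS : v ∈ Subgroup.centralizer S := h.mem_centralizer_of_mul_self_mem (hv ▸ u.2)
  exact ⟨⟨v, hvS⟩, Subtype.ext hv, fun w hw => Subtype.ext (huniq w (congrArg Subtype.val hw))⟩

theorem quotient_of_le_center (h : UniquelyTwoDivisible G) (N : Subgroup G) [N.Normal]
    (hcenter : N ≤ Subgroup.center G) (hroot : ∀ n ∈ N, ∃ e ∈ N, e * e = n) :
    UniquelyTwoDivisible (G ⧸ N) := by
  intro x
  induction x using QuotientGroup.induction_on with
  | H u =>
    obtain ⟨v, hv, huniq⟩ := h u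
    refine ⟨v, by rw [← hv, QuotientGroup.mk_mul], ?_⟩
    intro y hy
    induction y using QuotientGroup.induction_on with
    | H b =>
      rw [← QuotientGroup.mk_mul, QuotientGroup.eq] at hy
      obtain ⟨e, heN, he⟩ := hroot _ hy
      have hbe : Commute e b := ((Subgroup.mem_center_iff.mp (hcenter heN)) b).symm
      have hsq : b * e * (b * e) = u := by
        rw [hbe.mul_mul_mul_comm, he, mul_inv_cancel_left]
      rw [← huniq _ hsq, QuotientGroup.mk_mul_of_mem b heN]

end UniquelyTwoDivisible

theorem centralizer_quotient_uniquely_two_divisible_general {U : Type*} [Group U]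
    (h2div : ∀ u : U, ∃! v : U, v * v = u)
    (D : Subgroup U)
    (hDdiv : ∀ d ∈ D, ∃! v : U, v ∈ D ∧ v * v = d)
    [hnorm : (D.subgroupOf (Subgroup.centralizer (D : Set U))).Normal] :
    ∀ x : Subgroup.centralizer (D : Set U) ⧸
        D.subgroupOf (Subgroup.centralizer (D : Set U)),
      ∃! y, y * y = x := by
  have hU : UniquelyTwoDivisible U := h2div
  refine (hU.centralizer D).quotient_of_le_center _ ?_ ?_
  · exact fun n hn => Subgroup.mem_center_iff.mpr fun g => Subtype.ext (g.2 n hn).symm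
  · intro n hn
    obtain ⟨e, ⟨heD, he⟩, -⟩ := hDdiv n hn
    have heC : e ∈ Subgroup.centralizer (D : Set U) :=
      hU.mem_centralizer_of_mul_self_mem (he ▸ n.2)
    exact ⟨⟨e, heC⟩, heD, Subtype.ext he⟩

/-- If `D` is an abelian uniquely 2-divisible subgroup of a uniquely
2-divisible group `U`, then `C_U(D)/D` is uniquely 2-divisible. -/
theorem centralizer_quotient_uniquely_two_divisible {U : Type*} [Group U]
    (h2div : ∀ u : U, ∃! v : U, v * v = u)
    (D : Subgroup U)
    (hDab : ∀ d₁ ∈ D, ∀ d₂ ∈ D, d₁ * d₂ = d₂ * d₁)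
    (hDdiv : ∀ d ∈ D, ∃! v : U, v ∈ D ∧ v * v = d)
    [hnorm : (D.subgroupOf (Subgroup.centralizer (D : Set U))).Normal] :
    ∀ x : Subgroup.centralizer (D : Set U) ⧸
        D.subgroupOf (Subgroup.centralizer (D : Set U)),
      ∃! y, y * y = x :=
  centralizer_quotient_uniquely_two_divisible_general h2div D hDdiv (hnorm := hnorm)
end

section
/- Let U be a uniquely 2-divisible group, ν an involutory automorphism of U with finite fixed-point subgroup C_U(ν), and D an abelian uniquely 2-divisible subgroup of U inverted elementwise by ν. Then the induced involutory automorphism of C_U(D)/D has finite fixed-point subgroup; more precisely, the fixed points of the induced automorphism on C_U(D)/D are exactly the image of C_{C_U(D)}(ν)·D/D. -/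
open Subgroup

section FixedCosets

variable {G F : Type*} [Group G] [FunLike F G G] [MonoidHomClass F G G]

theorem map_mul_eq_self_of_mul_self_eq (ν : F) {x e : G} (he : ν e = e⁻¹)
    (hsq : e * e = x⁻¹ * ν x) : ν (x * e) = x * e := by
  rw [map_mul, he]
  calc ν x * e⁻¹ = x * (x⁻¹ * ν x) * e⁻¹ := by group
    _ = x * e := by rw [← hsq]; group

/-- A square root `e ∈ D` of `x⁻¹ ν(x)` corrects `x` to the `ν`-fixed point `x e` of its coset. -/
theorem setOf_mk_mul_inv_mem_eq_image_fixed (ν : F) {D H : Subgroup G} (hDH : D ≤ H)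
    (hH : H ≤ centralizer (D : Set G)) (hDinv : ∀ d ∈ D, ν d = d⁻¹)
    (hDsqrt : ∀ d ∈ D, ∃ e ∈ D, e * e = d) :
    {q : H ⧸ D.subgroupOf H | ∃ x : H, QuotientGroup.mk x = q ∧ ν (x : G) * (x : G)⁻¹ ∈ D}
      = QuotientGroup.mk '' {x : H | ν (x : G) = x} := by
  ext q
  constructor
  · rintro ⟨x, rfl, hx⟩
    have hconj : (x : G)⁻¹ * ν x = ν x * (x : G)⁻¹ := by
      have hcomm : (x : G) * (ν x * (x : G)⁻¹) = ν x * (x : G)⁻¹ * x :=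
        (mem_centralizer_iff.mp (hH x.2) _ hx).symm
      calc (x : G)⁻¹ * ν x = (x : G)⁻¹ * (ν x * (x : G)⁻¹ * x) := by group
        _ = ν x * (x : G)⁻¹ := by rw [← hcomm]; group
    obtain ⟨e, heD, hsq⟩ := hDsqrt _ hx
    refine ⟨x * ⟨e, hDH heD⟩, ?_, QuotientGroup.mk_mul_of_mem _ heD⟩
    exact map_mul_eq_self_of_mul_self_eq ν (hDinv e heD) (hsq.trans hconj.symm)
  · rintro ⟨x, hx, rfl⟩
    exact ⟨x, rfl, by rw [hx, mul_inv_cancel]; exact one_mem D⟩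

end FixedCosets

theorem induced_aut_fixed_points_general {U : Type*} [Group U]
    (ν : U ≃* U)
    (hfin : Set.Finite {x : U | ν x = x})
    (D : Subgroup U)
    (hDab : ∀ d₁ ∈ D, ∀ d₂ ∈ D, d₁ * d₂ = d₂ * d₁)
    (hDdiv : ∀ d ∈ D, ∃! v : U, v ∈ D ∧ v * v = d)
    (hDinv : ∀ d ∈ D, ν d = d⁻¹) :
    {q : Subgroup.centralizer (D : Set U) ⧸
        D.subgroupOf (Subgroup.centralizer (D : Set U)) |
        ∃ x : Subgroup.centralizer (D : Set U),
          QuotientGroup.mk x = q ∧ ν (x : U) * (x : U)⁻¹ ∈ D}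
      = QuotientGroup.mk ''
        {x : Subgroup.centralizer (D : Set U) | ν (x : U) = (x : U)} ∧
    Set.Finite {q : Subgroup.centralizer (D : Set U) ⧸
        D.subgroupOf (Subgroup.centralizer (D : Set U)) |
        ∃ x : Subgroup.centralizer (D : Set U),
          QuotientGroup.mk x = q ∧ ν (x : U) * (x : U)⁻¹ ∈ D} := by
  have hDC : D ≤ centralizer (D : Set U) := fun d hd =>
    mem_centralizer_iff.mpr fun d' hd' => hDab d' hd' d hd
  have hDsqrt : ∀ d ∈ D, ∃ e ∈ D, e * e = d := fun d hd =>
    let ⟨e, ⟨heD, hsq⟩, _⟩ := hDdiv d hd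
    ⟨e, heD, hsq⟩
  have hfixed := setOf_mk_mul_inv_mem_eq_image_fixed ν hDC le_rfl hDinv hDsqrt
  refine ⟨hfixed, hfixed ▸ Set.Finite.image _ ?_⟩
  exact hfin.preimage Subtype.coe_injective.injOn

/-- The induced involutory automorphism of `C_U(D)/D` has finite fixed-point
set; more precisely the fixed cosets (those with a representative `x` with
`ν x * x⁻¹ ∈ D`) are exactly the image of `C_{C_U(D)}(ν)` in the quotient. -/
theorem induced_aut_fixed_points {U : Type*} [Group U]
    (h2div : ∀ u : U, ∃! v : U, v * v = u)
    (ν : U ≃* U) (hν2 : ∀ x : U, ν (ν x) = x)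
    (hfin : Set.Finite {x : U | ν x = x})
    (D : Subgroup U)
    (hDab : ∀ d₁ ∈ D, ∀ d₂ ∈ D, d₁ * d₂ = d₂ * d₁)
    (hDdiv : ∀ d ∈ D, ∃! v : U, v ∈ D ∧ v * v = d)
    (hDinv : ∀ d ∈ D, ν d = d⁻¹)
    [hnorm : (D.subgroupOf (Subgroup.centralizer (D : Set U))).Normal] :
    {q : Subgroup.centralizer (D : Set U) ⧸
        D.subgroupOf (Subgroup.centralizer (D : Set U)) |
        ∃ x : Subgroup.centralizer (D : Set U),
          QuotientGroup.mk x = q ∧ ν (x : U) * (x : U)⁻¹ ∈ D}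
      = QuotientGroup.mk ''
        {x : Subgroup.centralizer (D : Set U) | ν (x : U) = (x : U)} ∧
    Set.Finite {q : Subgroup.centralizer (D : Set U) ⧸
        D.subgroupOf (Subgroup.centralizer (D : Set U)) |
        ∃ x : Subgroup.centralizer (D : Set U),
          QuotientGroup.mk x = q ∧ ν (x : U) * (x : U)⁻¹ ∈ D} :=
  induced_aut_fixed_points_general ν hfin D hDab hDdiv hDinv
end

section
/- Let U be a uniquely 2-divisible group, ν an involutory automorphism of U, and D an abelian uniquely 2-divisible subgroup of U inverted elementwise by ν. If E is a subgroup of C_U(D) containing D such that the induced automorphism inverts every element of E/D, then ν inverts every element of E; in particular E is abelian. -/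
/-!
Put `d = ν e · e ∈ D`. Applying the involution gives `ν d = e · ν e = e d e⁻¹`, and `d` commutes
with `e` because `E` centralizes `D`, so `ν d = d`. As `ν` also inverts `d`, we get `d² = 1`, and
unique square roots force `d = 1`, i.e. `ν e = e⁻¹`. An automorphism inverting every element of a
subgroup makes it abelian, since `e⁻¹ f⁻¹ = ν (e f) = f⁻¹ e⁻¹`.
-/

section

variable {U : Type*} [Group U]

theorem eq_one_of_mul_self_eq_one (h2div : ∀ u : U, ∃! v : U, v * v = u) {d : U}
    (hd : d * d = 1) : d = 1 :=
  (h2div 1).unique hd (one_mul 1)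

theorem map_mul_self_eq_of_commute (ν : U →* U) (hν2 : ∀ x : U, ν (ν x) = x) {e : U}
    (hcomm : Commute (ν e * e) e) : ν (ν e * e) = ν e * e :=
  calc ν (ν e * e) = e * ν e := by rw [map_mul, hν2]
    _ = e * (ν e * e) * e⁻¹ := by group
    _ = ν e * e := by rw [← hcomm.eq]; group

theorem commute_of_map_eq_inv (ν : U →* U) {e f : U} (he : ν e = e⁻¹) (hf : ν f = f⁻¹)
    (hef : ν (e * f) = (e * f)⁻¹) : e * f = f * e := by
  rw [map_mul, he, hf, mul_inv_rev, ← mul_inv_rev, ← mul_inv_rev, inv_inj] at hef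
  exact hef.symm

end

theorem inverted_lift_general {U : Type*} [Group U]
    (h2div : ∀ u : U, ∃! v : U, v * v = u)
    (ν : U ≃* U) (hν2 : ∀ x : U, ν (ν x) = x)
    (D : Subgroup U)
    (hDinv : ∀ d ∈ D, ν d = d⁻¹)
    (E : Subgroup U) (hEC : E ≤ Subgroup.centralizer (D : Set U))
    (hEinv : ∀ e ∈ E, ν e * e ∈ D) :
    (∀ e ∈ E, ν e = e⁻¹) ∧ ∀ e ∈ E, ∀ f ∈ E, e * f = f * e := by
  have hinv : ∀ e ∈ E, ν e = e⁻¹ := by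
    intro e he
    have hd : ν e * e ∈ D := hEinv e he
    have hfix : ν (ν e * e) = ν e * e :=
      map_mul_self_eq_of_commute ν.toMonoidHom hν2 (Subgroup.mem_centralizer_iff.mp (hEC he) _ hd)
    have hsq : (ν e * e) * (ν e * e) = 1 := by
      nth_rewrite 1 [← hfix]
      rw [hDinv _ hd, inv_mul_cancel]
    exact eq_inv_of_mul_eq_one_left (eq_one_of_mul_self_eq_one h2div hsq)
  exact ⟨hinv, fun e he f hf =>
    commute_of_map_eq_inv ν.toMonoidHom (hinv e he) (hinv f hf) (hinv _ (mul_mem he hf))⟩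

/-- If `D ≤ E ≤ C_U(D)` and the induced automorphism inverts every element of
`E/D`, then `ν` inverts every element of `E`; in particular `E` is abelian. -/
theorem inverted_lift {U : Type*} [Group U]
    (h2div : ∀ u : U, ∃! v : U, v * v = u)
    (ν : U ≃* U) (hν2 : ∀ x : U, ν (ν x) = x)
    (D : Subgroup U)
    (hDab : ∀ d₁ ∈ D, ∀ d₂ ∈ D, d₁ * d₂ = d₂ * d₁)
    (hDdiv : ∀ d ∈ D, ∃! v : U, v ∈ D ∧ v * v = d)
    (hDinv : ∀ d ∈ D, ν d = d⁻¹)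
    (E : Subgroup U) (hDE : D ≤ E) (hEC : E ≤ Subgroup.centralizer (D : Set U))
    (hEinv : ∀ e ∈ E, ν e * e ∈ D) :
    (∀ e ∈ E, ν e = e⁻¹) ∧ ∀ e ∈ E, ∀ f ∈ E, e * f = f * e :=
  inverted_lift_general h2div ν hν2 D hDinv E hEC hEinv
end

section
/- Let U be a uniquely 2-divisible group, ν an involutory automorphism of U, D an abelian uniquely 2-divisible subgroup inverted by ν, and E a subgroup with D ≤ E ≤ C_U(D). If for some x ∈ E the coset xD satisfies ν(x)D = x⁻¹D, then in fact ν(x) = x⁻¹. -/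
/-!
Put `d = ν x * x ∈ D`. Since `x` centralizes `d`, it commutes with `ν x`, so `ν d = x * ν x = d`;
but `ν` inverts `D`, hence `d² = 1`, and unique 2-divisibility leaves only `d = 1`.
-/

theorem eq_one_of_mul_self_eq_one_of_existsUnique_sqrt_s8 {G : Type*} [Monoid G]
    (hsqrt : ∃! v : G, v * v = 1) {d : G} (hd : d * d = 1) : d = 1 :=
  hsqrt.unique hd (one_mul 1)

theorem MulEquiv.apply_mul_self_of_involutive_of_commute {G : Type*} [Group G] (ν : G ≃* G)
    (hν : Function.Involutive ν) {x : G} (hx : Commute x (ν x * x)) :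
    ν (ν x * x) = ν x * x := by
  have hx' : x * ν x = ν x * x :=
    mul_right_cancel (b := x) (by simpa only [mul_assoc] using hx.eq)
  rw [map_mul, hν x, hx']

theorem coset_inverted_implies_inverted_general {U : Type*} [Group U]
    (h2div : ∀ u : U, ∃! v : U, v * v = u)
    (ν : U ≃* U) (hν2 : ∀ x : U, ν (ν x) = x)
    (D : Subgroup U)
    (hDinv : ∀ d ∈ D, ν d = d⁻¹)
    (x : U) (hx : x ∈ Subgroup.centralizer (D : Set U))
    (hxcoset : ν x * x ∈ D) :
    ν x = x⁻¹ := by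
  have hfixed : ν (ν x * x) = ν x * x :=
    ν.apply_mul_self_of_involutive_of_commute hν2 (hx _ hxcoset).symm
  have hsq : (ν x * x) * (ν x * x) = 1 :=
    mul_eq_one_iff_eq_inv.mpr (hfixed.symm.trans (hDinv _ hxcoset))
  exact eq_inv_of_mul_eq_one_left (eq_one_of_mul_self_eq_one_of_existsUnique_sqrt_s8 (h2div 1) hsq)

/-- If `x ∈ C_U(D)` and the coset `xD` is inverted by the induced automorphism
(i.e. `ν x * x ∈ D`), then in fact `ν x = x⁻¹`. -/
theorem coset_inverted_implies_inverted {U : Type*} [Group U]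
    (h2div : ∀ u : U, ∃! v : U, v * v = u)
    (ν : U ≃* U) (hν2 : ∀ x : U, ν (ν x) = x)
    (D : Subgroup U)
    (hDab : ∀ d₁ ∈ D, ∀ d₂ ∈ D, d₁ * d₂ = d₂ * d₁)
    (hDdiv : ∀ d ∈ D, ∃! v : U, v ∈ D ∧ v * v = d)
    (hDinv : ∀ d ∈ D, ν d = d⁻¹)
    (x : U) (hx : x ∈ Subgroup.centralizer (D : Set U))
    (hxcoset : ν x * x ∈ D) :
    ν x = x⁻¹ :=
  coset_inverted_implies_inverted_general h2div ν hν2 D hDinv x hx hxcoset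
end

section
/- Let U be a uniquely 2-divisible group, ν an involutory automorphism, D a central uniquely 2-divisible subgroup of a subgroup C ≤ U with ν(D) = D and ν inverting D, such that D is maximal among central subgroups of C inverted by ν. If C is ν-invariant and C/D has an element of order 2, then that element lies in D; hence if C/D is finite it has odd order. -/
theorem Subgroup.mem_of_mul_self_mem {G : Type*} [Group G]
    (hsq : Function.Injective fun v : G => v * v) {D : Subgroup G}
    (hD : ∀ d ∈ D, ∃ v ∈ D, v * v = d) {t : G} (ht : t * t ∈ D) : t ∈ D := by
  obtain ⟨s, hs, hss⟩ := hD _ ht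
  rwa [hsq hss] at hs

theorem odd_natCard_of_sq_eq_one {G : Type*} [Group G] [Finite G]
    (h : ∀ g : G, g ^ 2 = 1 → g = 1) : Odd (Nat.card G) := by
  by_contra heven
  rw [Nat.not_odd_iff_even, even_iff_two_dvd] at heven
  obtain ⟨g, hg⟩ := exists_prime_orderOf_dvd_card' 2 heven
  have hg1 : g = 1 := h g (hg ▸ pow_orderOf_eq_one g)
  rw [hg1, orderOf_one] at hg
  exact absurd hg (by norm_num)

theorem quotient_odd_order_general {U : Type*} [Group U]
    (h2div : ∀ u : U, ∃! v : U, v * v = u)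
    (C : Subgroup U)
    (D : Subgroup U)
    (hDdiv : ∀ d ∈ D, ∃! v : U, v ∈ D ∧ v * v = d)
    [hnorm : (D.subgroupOf C).Normal] :
    (∀ t ∈ C, t * t ∈ D → t ∈ D) ∧
      (Finite (C ⧸ D.subgroupOf C) → Odd (Nat.card (C ⧸ D.subgroupOf C))) := by
  have hsq : Function.Injective fun v : U => v * v := fun a b hab =>
    (h2div (a * a)).unique rfl hab.symm
  have hroot : ∀ t : U, t * t ∈ D → t ∈ D := fun t =>
    Subgroup.mem_of_mul_self_mem hsq fun d hd => (hDdiv d hd).exists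
  refine ⟨fun t _ => hroot t, fun _ => odd_natCard_of_sq_eq_one ?_⟩
  intro g hx
  obtain ⟨x, rfl⟩ := QuotientGroup.mk_surjective g
  rw [← QuotientGroup.mk_pow, QuotientGroup.eq_one_iff, Subgroup.mem_subgroupOf, pow_two] at hx
  exact (QuotientGroup.eq_one_iff x).2 (Subgroup.mem_subgroupOf.2 (hroot x hx))

/-- If `D` is a maximal `ν`-inverted central uniquely 2-divisible subgroup of a
`ν`-invariant subgroup `C`, then any `t ∈ C` with `t² ∈ D` lies in `D`; hence
if `C/D` is finite it has odd order. -/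
theorem quotient_odd_order {U : Type*} [Group U]
    (h2div : ∀ u : U, ∃! v : U, v * v = u)
    (ν : U ≃* U) (hν2 : ∀ x : U, ν (ν x) = x)
    (C : Subgroup U) (hCinv : ∀ x ∈ C, ν x ∈ C)
    (D : Subgroup U) (hDC : D ≤ C)
    (hDcentral : ∀ d ∈ D, ∀ c ∈ C, d * c = c * d)
    (hDdiv : ∀ d ∈ D, ∃! v : U, v ∈ D ∧ v * v = d)
    (hDinv : ∀ d ∈ D, ν d = d⁻¹)
    (hDmax : ∀ D' : Subgroup U, D ≤ D' → D' ≤ C →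
      (∀ d ∈ D', ∀ c ∈ C, d * c = c * d) → (∀ d ∈ D', ν d = d⁻¹) → D' = D)
    [hnorm : (D.subgroupOf C).Normal] :
    (∀ t ∈ C, t * t ∈ D → t ∈ D) ∧
      (Finite (C ⧸ D.subgroupOf C) → Odd (Nat.card (C ⧸ D.subgroupOf C))) :=
  quotient_odd_order_general h2div C D hDdiv (hnorm := hnorm)
end

section
/- Let G be a group such that every finitely generated subgroup H of G is solvable and has finite quotient H/Z(H). Then the derived subgroup G' of G is periodic (every element of G' has finite order). -/
/-!
Every element of `G'` is a product of finitely many commutators, so it lies in `H'` for the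
finitely generated subgroup `H` generated by their entries. Since `Z(H)` has finite index and a
commutator `⁅a, b⁆` only depends on the cosets `a Z(H)` and `b Z(H)`, `H` has finitely many
commutators, and by Schur's theorem `H'` is finite. Hence the element has finite order.
-/

open Subgroup
open scoped commutatorElement

section

variable {G : Type*} [Group G]

theorem commutatorElement_mul_mem_center (a b : G) {z w : G} (hz : z ∈ center G)
    (hw : w ∈ center G) : ⁅a * z, b * w⁆ = ⁅a, b⁆ := by
  have hz' : ∀ g, g * z = z * g := mem_center_iff.mp hz
  have hw' : ∀ g, g * w = w * g := mem_center_iff.mp hw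
  rw [commutatorElement_def, commutatorElement_def, mul_inv_rev, mul_inv_rev]
  calc a * z * (b * w) * (z⁻¹ * a⁻¹) * (w⁻¹ * b⁻¹)
      = a * (z * (b * w)) * z⁻¹ * a⁻¹ * (w⁻¹ * b⁻¹) := by group
    _ = a * b * (w * a⁻¹) * w⁻¹ * b⁻¹ := by rw [← hz']; group
    _ = a * b * a⁻¹ * b⁻¹ := by rw [← hw']; group

theorem finite_commutatorSet_of_finiteIndex_center [(center G).FiniteIndex] :
    Finite (commutatorSet G) := by
  have : Finite (G ⧸ center G) := finite_quotient_of_finiteIndex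
  refine Set.Finite.to_subtype <|
    (Set.finite_range fun p : (G ⧸ center G) × (G ⧸ center G) => ⁅p.1.out, p.2.out⁆).subset ?_
  rintro _ ⟨a, b, rfl⟩
  obtain ⟨z, hz⟩ := QuotientGroup.mk_out_eq_mul (center G) a
  obtain ⟨w, hw⟩ := QuotientGroup.mk_out_eq_mul (center G) b
  exact ⟨(a, b), by simp only [hz, hw]; exact commutatorElement_mul_mem_center a b z.2 w.2⟩

theorem finite_commutator_of_finiteIndex_center [(center G).FiniteIndex] :
    Finite (commutator G) :=
  have := finite_commutatorSet_of_finiteIndex_center (G := G)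
  inferInstance

theorem exists_fg_mem_commutator_of_mem_commutator {g : G} (hg : g ∈ commutator G) :
    ∃ H : Subgroup G, H.FG ∧ g ∈ ⁅H, H⁆ := by
  rw [commutator_eq_closure] at hg
  induction hg using closure_induction with
  | mem _ hx =>
    obtain ⟨a, b, rfl⟩ := hx
    have hfg : (closure ({a, b} : Set G)).FG := (fg_iff _).mpr ⟨_, rfl, Set.toFinite _⟩
    exact ⟨_, hfg, commutator_mem_commutator (subset_closure (by simp))
      (subset_closure (by simp))⟩
  | one => exact ⟨⊥, FG.bot, one_mem _⟩
  | mul _ _ _ _ hx hy =>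
    obtain ⟨H, hH, hxH⟩ := hx
    obtain ⟨K, hK, hyK⟩ := hy
    exact ⟨H ⊔ K, hH.sup hK, mul_mem (commutator_mono le_sup_left le_sup_left hxH)
      (commutator_mono le_sup_right le_sup_right hyK)⟩
  | inv _ _ hx =>
    obtain ⟨H, hH, hxH⟩ := hx
    exact ⟨H, hH, inv_mem hxH⟩

end

/-- If every finitely generated subgroup `H` of `G` is solvable with
`H / Z(H)` finite, then the derived subgroup of `G` is periodic. -/
theorem commutator_periodic {G : Type*} [Group G]
    (h : ∀ H : Subgroup G, H.FG → IsSolvable H ∧ (Subgroup.center H).FiniteIndex) :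
    ∀ g ∈ commutator G, IsOfFinOrder g := by
  intro g hg
  obtain ⟨H, hH, hgH⟩ := exists_fg_mem_commutator_of_mem_commutator hg
  have : (center H).FiniteIndex := (h H hH).2
  have : Finite (commutator H) := finite_commutator_of_finiteIndex_center
  rw [← H.map_subtype_commutator] at hgH
  obtain ⟨x, hx, rfl⟩ := hgH
  exact H.subtype.isOfFinOrder <| (commutator H).subtype.isOfFinOrder <|
    isOfFinOrder_of_finite (⟨x, hx⟩ : commutator H)
end

section
/- Let U be a group with an involutory automorphism ν, and suppose U is uniquely 2-divisible. Let R be the subgroup generated by S = {x ∈ U : ν(x) = x⁻¹}. Then R is ν-invariant and normal in U, and U = R · C_U(ν). -/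
/-!
If `s * s = u * (ν u)⁻¹`, then `(ν s)⁻¹` is another square root of the same element, so unique
2-divisibility forces `ν s = s⁻¹`; hence `u = s * (s⁻¹ * u)` with `s ∈ S` and `s⁻¹ * u` fixed by
`ν`. Both `ν` and conjugation by a `ν`-fixed element map `S` into itself, hence preserve
`R = ⟨S⟩`; since every element of `U` is such a fixed element times an element of `R`, `R` is
normal.
-/

theorem Subgroup.apply_mem_closure_of_mapsTo {G : Type*} [Group G] {f : G →* G} {S : Set G}
    (hf : Set.MapsTo f S S) {x : G} (hx : x ∈ Subgroup.closure S) : f x ∈ Subgroup.closure S :=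
  (Subgroup.closure_le (Subgroup.comap f (Subgroup.closure S))).2
    (fun _ hy => Subgroup.subset_closure (hf hy)) hx

theorem Subgroup.normal_of_forall_eq_mul {G : Type*} [Group G] {H : Subgroup G}
    (h : ∀ g : G, ∃ r ∈ H, ∃ c : G, (∀ n ∈ H, c * n * c⁻¹ ∈ H) ∧ g = r * c) : H.Normal := by
  refine ⟨fun n hn g => ?_⟩
  obtain ⟨r, hr, c, hc, rfl⟩ := h g
  have hconj : r * c * n * (r * c)⁻¹ = r * (c * n * c⁻¹) * r⁻¹ := by group
  rw [hconj]
  exact H.mul_mem (H.mul_mem hr (hc n hn)) (H.inv_mem hr)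

section Involution

variable {U : Type*} [Group U] (ν : U ≃* U)

theorem mapsTo_inverted_of_involutive (hν2 : ∀ x : U, ν (ν x) = x) :
    Set.MapsTo ν {x : U | ν x = x⁻¹} {x : U | ν x = x⁻¹} := by
  intro x (hx : ν x = x⁻¹)
  change ν (ν x) = (ν x)⁻¹
  rw [hν2, hx, inv_inv]

theorem mapsTo_conj_inverted_of_fixed {c : U} (hc : ν c = c) :
    Set.MapsTo (MulAut.conj c) {x : U | ν x = x⁻¹} {x : U | ν x = x⁻¹} := by
  intro x (hx : ν x = x⁻¹)
  change ν (c * x * c⁻¹) = (c * x * c⁻¹)⁻¹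
  simp only [map_mul, map_inv, hc, hx, mul_inv_rev, inv_inv, mul_assoc]

theorem apply_eq_inv_of_mul_self_eq {u s : U} (hν2 : ∀ x : U, ν (ν x) = x)
    (hs : s * s = u * (ν u)⁻¹) (huniq : ∀ t : U, t * t = u * (ν u)⁻¹ → t = s) :
    ν s = s⁻¹ := by
  have hsq : (ν s)⁻¹ * (ν s)⁻¹ = u * (ν u)⁻¹ := by
    rw [← mul_inv_rev, ← map_mul, hs, map_mul, map_inv, hν2, mul_inv_rev, inv_inv]
  exact inv_eq_iff_eq_inv.mp (huniq _ hsq)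

theorem exists_inverted_mul_fixed (h2div : ∀ u : U, ∃! v : U, v * v = u)
    (hν2 : ∀ x : U, ν (ν x) = x) (u : U) :
    ∃ s : U, ν s = s⁻¹ ∧ ∃ c : U, ν c = c ∧ u = s * c := by
  obtain ⟨s, hs, huniq⟩ := h2div (u * (ν u)⁻¹)
  have hνs : ν s = s⁻¹ := apply_eq_inv_of_mul_self_eq ν hν2 hs huniq
  refine ⟨s, hνs, s⁻¹ * u, ?_, by group⟩
  rw [map_mul, map_inv, hνs, inv_inv]
  refine mul_left_cancel (a := s) ?_
  rw [← mul_assoc, hs]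
  group

end Involution

/-- Let `R = ⟨S⟩` where `S = {x | ν x = x⁻¹}`.  Then `R` is `ν`-invariant and
normal in `U`, and `U = R · C_U(ν)`. -/
theorem R_normal_and_factorization {U : Type*} [Group U]
    (h2div : ∀ u : U, ∃! v : U, v * v = u)
    (ν : U ≃* U) (hν2 : ∀ x : U, ν (ν x) = x)
    (R : Subgroup U) (hR : R = Subgroup.closure {x : U | ν x = x⁻¹}) :
    (∀ x ∈ R, ν x ∈ R) ∧ R.Normal ∧
      ∀ u : U, ∃ r ∈ R, ∃ c : U, ν c = c ∧ u = r * c := by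
  subst hR
  have hfactor := exists_inverted_mul_fixed ν h2div hν2
  refine ⟨fun x hx => Subgroup.apply_mem_closure_of_mapsTo (f := ν.toMonoidHom)
    (mapsTo_inverted_of_involutive ν hν2) hx, ?_, fun u => ?_⟩
  · refine Subgroup.normal_of_forall_eq_mul fun g => ?_
    obtain ⟨s, hs, c, hc, rfl⟩ := hfactor g
    exact ⟨s, Subgroup.subset_closure hs, c, fun n hn =>
      Subgroup.apply_mem_closure_of_mapsTo (f := (MulAut.conj c).toMonoidHom)
        (mapsTo_conj_inverted_of_fixed ν hc) hn, rfl⟩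
  · obtain ⟨s, hs, c, hc, hu⟩ := hfactor u
    exact ⟨s, Subgroup.subset_closure hs, c, hc, hu⟩
end

section
/- Let U be a uniquely 2-divisible group with involutory automorphism ν such that C_U(ν) is finite. For each a in an abelian ν-inverted subgroup A, let s_a be the unique element with s_a² = (a u)⁻¹ · ν(a u) for fixed u ∈ U, and v_a := a u s_a. Then v_a ∈ C_U(ν), and the map a ↦ v_a from A to C_U(ν) partitions A into finitely many fibers. -/
/-!
Since `ν` is an involutive automorphism, both `ν (s a)` and `(s a)⁻¹` square to
`(ν (a * u))⁻¹ * (a * u)`, so `ν (s a) = (s a)⁻¹` by uniqueness of square roots. Then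
`ν (a * u * s a) = ν (a * u) * (s a)⁻¹ = a * u * (s a)² * (s a)⁻¹ = a * u * s a`.
The fibers of `a ↦ a * u * s a` are indexed by values in the finite set `C_U(ν)`.
-/

section SquareRoot

variable {U F : Type*} [Group U] [FunLike F U U] [MonoidHomClass F U U]

theorem map_eq_inv_of_mul_self_eq_inv_mul_map (h2div : ∀ u : U, ∃! v : U, v * v = u)
    {ν : F} (hν : Function.Involutive ν) {x s : U} (hs : s * s = x⁻¹ * ν x) :
    ν s = s⁻¹ := by
  have hνs : ν s * ν s = (ν x)⁻¹ * x := by rw [← map_mul, hs, map_mul, map_inv, hν]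
  have hinv : s⁻¹ * s⁻¹ = (ν x)⁻¹ * x := by rw [← mul_inv_rev, hs, mul_inv_rev, inv_inv]
  exact (h2div _).unique hνs hinv

theorem map_mul_eq_self_of_mul_self_eq_inv_mul_map (h2div : ∀ u : U, ∃! v : U, v * v = u)
    {ν : F} (hν : Function.Involutive ν) {x s : U} (hs : s * s = x⁻¹ * ν x) :
    ν (x * s) = x * s := by
  have hνx : ν x = x * (s * s) := by rw [hs, mul_inv_cancel_left]
  rw [map_mul, map_eq_inv_of_mul_self_eq_inv_mul_map h2div hν hs, hνx, mul_assoc,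
    mul_inv_cancel_right]

end SquareRoot

section Fibers

variable {α β : Type*}

theorem Set.Finite.setOf_fibers {S : Set α} {T : Set β} {f : α → β} (hT : T.Finite)
    (hf : Set.MapsTo f S T) : {M : Set α | ∃ a ∈ S, M = {b ∈ S | f b = f a}}.Finite :=
  (hT.image fun c => {b ∈ S | f b = c}).subset <| by
    rintro M ⟨a, ha, rfl⟩
    exact ⟨f a, hf ha, rfl⟩

theorem Set.eq_biUnion_fibers (S : Set α) (f : α → β) :
    S = ⋃ a ∈ S, {b ∈ S | f b = f a} :=
  Set.Subset.antisymm (fun _ hb => Set.mem_biUnion hb ⟨hb, rfl⟩)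
    (Set.iUnion₂_subset fun _ _ => Set.sep_subset _ _)

end Fibers

theorem va_fixed_and_finite_fibers_general {U : Type*} [Group U]
    (h2div : ∀ u : U, ∃! v : U, v * v = u)
    (ν : U ≃* U) (hν2 : ∀ x : U, ν (ν x) = x)
    (hfin : Set.Finite {x : U | ν x = x})
    (A : Subgroup U)
    (u : U) (s : U → U)
    (hs : ∀ a : U, s a * s a = (a * u)⁻¹ * ν (a * u)) :
    (∀ a ∈ A, ν (a * u * s a) = a * u * s a) ∧
      Set.Finite {M : Set U | ∃ a ∈ (A : Set U),
        M = {b ∈ (A : Set U) | b * u * s b = a * u * s a}} ∧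
      (A : Set U) = ⋃ a ∈ (A : Set U),
        {b ∈ (A : Set U) | b * u * s b = a * u * s a} := by
  have hfix : ∀ a : U, ν (a * u * s a) = a * u * s a := fun a =>
    map_mul_eq_self_of_mul_self_eq_inv_mul_map h2div hν2 (hs a)
  exact ⟨fun a _ => hfix a, hfin.setOf_fibers fun a _ => hfix a,
    Set.eq_biUnion_fibers _ _⟩

/-- For a fixed `u`, the elements `v_a := a * u * s a` (where `s a` is the
square root of `(a*u)⁻¹ * ν (a*u)`) are fixed by `ν`, and the corresponding
fibers give a finite cover of the `ν`-inverted abelian subgroup `A`. -/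
theorem va_fixed_and_finite_fibers {U : Type*} [Group U]
    (h2div : ∀ u : U, ∃! v : U, v * v = u)
    (ν : U ≃* U) (hν2 : ∀ x : U, ν (ν x) = x)
    (hfin : Set.Finite {x : U | ν x = x})
    (A : Subgroup U)
    (hAab : ∀ a ∈ A, ∀ b ∈ A, a * b = b * a)
    (hAinv : ∀ a ∈ A, ν a = a⁻¹)
    (u : U) (s : U → U)
    (hs : ∀ a : U, s a * s a = (a * u)⁻¹ * ν (a * u)) :
    (∀ a ∈ A, ν (a * u * s a) = a * u * s a) ∧
      Set.Finite {M : Set U | ∃ a ∈ (A : Set U),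
        M = {b ∈ (A : Set U) | b * u * s b = a * u * s a}} ∧
      (A : Set U) = ⋃ a ∈ (A : Set U),
        {b ∈ (A : Set U) | b * u * s b = a * u * s a} :=
  va_fixed_and_finite_fibers_general h2div ν hν2 hfin A u s hs
end
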